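/- Let X_S be a non-sofic S-gap shift and F ∈ Aut(X_S) a shiftless automorphism of radius r whose inverse also has radius r. Then for every x ∈ X_S, i ∈ ℤ, and n ≥ 2r, the word 01ⁿ0 occurs in x at position i if and only if 01ⁿ0 occurs in F(x) at position i. -/

import Mathlib

/-- The shift map on bi-infinite sequences. -/
def shiftMap {A : Type*} (x : ℤ → A) : ℤ → A := fun i => x (i + 1)

/-- The `k`-fold shift map (`σ^k`). -/
def shiftPow {A : Type*} (k : ℤ) (x : ℤ → A) : ℤ → A := fun i => x (i + k)

/-- A subshift: a closed shift-invariant subset of `A^ℤ`. -/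
def IsSubshift {A : Type*} [TopologicalSpace A] (X : Set (ℤ → A)) : Prop :=
  IsClosed X ∧ shiftMap '' X = X

/-- The word `w` occurs in `x` at position `i`. -/
def occursAt {A : Type*} (x : ℤ → A) (w : List A) (i : ℤ) : Prop :=
  ∀ (k : ℕ) (hk : k < w.length), x (i + k) = w.get ⟨k, hk⟩

/-- `w` belongs to the language of `X`. -/
def InLang {A : Type*} (X : Set (ℤ → A)) (w : List A) : Prop :=
  ∃ x ∈ X, occursAt x w 0

/-- The set of contexts of a word with respect to `X`. -/
def contexts {A : Type*} (X : Set (ℤ → A)) (w : List A) : Set (List A × List A) :=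
  {p | InLang X (p.1 ++ w ++ p.2)}

/-- `w` is a synchronizing word of `X`. -/
def IsSynchronizing {A : Type*} (X : Set (ℤ → A)) (w : List A) : Prop :=
  InLang X w ∧ ∀ u v : List A, InLang X (u ++ w) → InLang X (w ++ v) → InLang X (u ++ w ++ v)

/-- `X` is a transitive subshift. -/
def IsTransitiveSubshift {A : Type*} (X : Set (ℤ → A)) : Prop :=
  ∀ u v : List A, InLang X u → InLang X v → ∃ w : List A, InLang X (u ++ w ++ v)

/-- A reversible cellular automaton (automorphism) of the subshift `X`. -/
def IsAutomorphism {A : Type*} [TopologicalSpace A] (X : Set (ℤ → A))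
    (F : (ℤ → A) → (ℤ → A)) : Prop :=
  Set.MapsTo F X X ∧ ContinuousOn F X ∧ (∀ x ∈ X, F (shiftMap x) = shiftMap (F x)) ∧
  ∃ G : (ℤ → A) → (ℤ → A), Set.MapsTo G X X ∧ ContinuousOn G X ∧
    (∀ x ∈ X, G (shiftMap x) = shiftMap (G x)) ∧
    (∀ x ∈ X, G (F x) = x) ∧ (∀ x ∈ X, F (G x) = x)

/-- `F` is given on `X` by a local rule of radius `r`. -/
def HasRadius {A : Type*} (X : Set (ℤ → A)) (F : (ℤ → A) → (ℤ → A)) (r : ℕ) : Prop :=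
  ∃ f : (Fin (2 * r + 1) → A) → A, ∀ x ∈ X, ∀ i : ℤ, F x i = f (fun k => x (i - r + k))

/-- `x` is an equicontinuity point of `(X, F)` (combinatorial formulation). -/
def IsEquicontinuityPoint {A : Type*} (X : Set (ℤ → A)) (F : (ℤ → A) → (ℤ → A))
    (x : ℤ → A) : Prop :=
  x ∈ X ∧ ∀ N : ℕ, ∃ M : ℕ, ∀ y ∈ X, (∀ j : ℤ, |j| ≤ (M : ℤ) → y j = x j) →
    ∀ t : ℕ, ∀ j : ℤ, |j| ≤ (N : ℤ) → F^[t] y j = F^[t] x j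

/-- The generating word `0 1^n` of an `S`-gap shift. -/
def genWord (n : ℕ) : List Bool := false :: List.replicate n true

/-- `w` is a concatenation of generating words `0 1^n`, `n ∈ S`. -/
def InGenStar (S : Set ℕ) (w : List Bool) : Prop :=
  ∃ l : List ℕ, (∀ n ∈ l, n ∈ S) ∧ w = (l.map genWord).flatten

/-- The subword `x[i, i+n-1]` of a configuration. -/
def wordAt {A : Type*} (x : ℤ → A) (i : ℤ) (n : ℕ) : List A :=
  (List.range n).map fun k => x (i + k)

/-- The `S`-gap shift: configurations all of whose finite subwords occur in some
concatenation of the generating words. -/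
def SGap (S : Set ℕ) : Set (ℤ → Bool) :=
  {x | ∀ (i : ℤ) (n : ℕ), ∃ w : List Bool, InGenStar S w ∧ (wordAt x i n) <:+: w}

/-- The characteristic sequence of `S` is eventually periodic. -/
def EventuallyPeriodic (S : Set ℕ) : Prop :=
  ∃ p > 0, ∃ N : ℕ, ∀ n ≥ N, (n ∈ S ↔ n + p ∈ S)

/-- `X_{S,ℓ}`: points whose right tail from `0` is `01^∞`. -/
def SGapLeft (S : Set ℕ) : Set (ℤ → Bool) :=
  {x | x ∈ SGap S ∧ x 0 = false ∧ ∀ i : ℤ, 0 < i → x i = true}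

/-- `X_{S,→}`: points whose left tail up to `0` is `^∞10`. -/
def SGapRight (S : Set ℕ) : Set (ℤ → Bool) :=
  {x | x ∈ SGap S ∧ x 0 = false ∧ ∀ i : ℤ, i < 0 → x i = true}

/-- The word `0 1^n 0`. -/
def gapWord (n : ℕ) : List Bool := false :: (List.replicate n true ++ [false])

/-!
Fill `x` with `1`s after the first `0` of an occurrence of `0 1^n 0` at `i`, resp. before its
last `0`: the results have their last zero at `i`, resp. their first zero at `i + n + 1`.
Shiftlessness and commutation with the shift make `F` keep such a zero in place, and by
locality `F x` agrees with the two images on `(-∞, i + n - r]` and on `[i + r + 1, ∞)`, which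
cover the occurrence since `2 r ≤ n`. For the converse, run the same argument for the inverse
`G`, which is shiftless too: `F` and `G` fix `1^ℤ`, so if `y` has its last zero at `0` then
`G y` has a last zero somewhere, and `F` must move it back to `0`.
-/

section Words

variable {A : Type*}

theorem occursAt_nil (x : ℤ → A) (i : ℤ) : occursAt x [] i := fun _ hk => absurd hk (by simp)

theorem occursAt_cons {x : ℤ → A} {a : A} {w : List A} {i : ℤ} :
    occursAt x (a :: w) i ↔ x i = a ∧ occursAt x w (i + 1) := by
  constructor
  · intro h
    refine ⟨by simpa using h 0 (by simp), fun k hk => ?_⟩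
    simpa [add_assoc, add_comm (1 : ℤ)] using h (k + 1) (by simpa using hk)
  · rintro ⟨h0, h⟩ (_ | k) hk
    · simpa using h0
    · simpa [add_assoc, add_comm (1 : ℤ)] using h k (by simpa using hk)

theorem occursAt_append {x : ℤ → A} {u v : List A} {i : ℤ} :
    occursAt x (u ++ v) i ↔ occursAt x u i ∧ occursAt x v (i + u.length) := by
  induction u generalizing i with
  | nil => simp [occursAt_nil]
  | cons a u ih =>
    simp only [List.cons_append, occursAt_cons, ih, List.length_cons, and_assoc]
    push_cast
    ring_nf

theorem occursAt_replicate {x : ℤ → A} {a : A} {n : ℕ} {i : ℤ} :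
    occursAt x (List.replicate n a) i ↔ ∀ j, i ≤ j → j < i + n → x j = a := by
  simp only [occursAt, List.length_replicate, List.get_eq_getElem, List.getElem_replicate]
  constructor
  · intro h j hij hjn
    have := h (j - i).toNat (by omega)
    rwa [show i + ((j - i).toNat : ℤ) = j by omega] at this
  · intro h k hk
    exact h _ (by omega) (by omega)

theorem occursAt_gapWord_iff {x : ℤ → Bool} {i : ℤ} {n : ℕ} :
    occursAt x (gapWord n) i ↔
      x i = false ∧ (∀ j, i < j → j ≤ i + n → x j = true) ∧ x (i + n + 1) = false := by
  simp only [gapWord, occursAt_cons, occursAt_append, occursAt_replicate, List.length_replicate,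
    occursAt_nil, and_true]
  refine and_congr Iff.rfl (and_congr ?_ ?_)
  · exact forall_congr' fun j => by constructor <;> intro h h1 h2 <;> exact h (by omega) (by omega)
  · rw [add_right_comm]

-- `wordAt` elaborates `List.range n` into `List ℤ` through the list monad.
theorem wordAt_eq_map (x : ℤ → A) (a : ℤ) (m : ℕ) :
    wordAt x a m = (List.range m).map fun k : ℕ => x (a + k) := by
  simp [wordAt, ← List.map_eq_flatMap]

theorem wordAt_add (x : ℤ → A) (a : ℤ) (p q : ℕ) :
    wordAt x a (p + q) = wordAt x a p ++ wordAt x (a + p) q := by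
  simp only [wordAt_eq_map, List.range_add, List.map_append, List.map_map]
  congr 1
  exact List.map_congr_left fun k _ => by simp [add_assoc]

theorem wordAt_succ (x : ℤ → A) (a : ℤ) (m : ℕ) :
    wordAt x a (m + 1) = x a :: wordAt x (a + 1) m := by
  rw [add_comm, wordAt_add]
  simp [wordAt_eq_map]

theorem wordAt_succ' (x : ℤ → A) (a : ℤ) (m : ℕ) :
    wordAt x a (m + 1) = wordAt x a m ++ [x (a + m)] := by
  rw [wordAt_add]
  simp [wordAt_eq_map]

theorem wordAt_congr {x y : ℤ → A} {a : ℤ} {m : ℕ}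
    (h : ∀ j, a ≤ j → j < a + m → x j = y j) : wordAt x a m = wordAt y a m := by
  simp only [wordAt_eq_map]
  exact List.map_congr_left fun k hk => h _ (by omega) (by simp at hk; omega)

theorem wordAt_eq_replicate {x : ℤ → A} {a : ℤ} {m : ℕ} {c : A}
    (h : ∀ j, a ≤ j → j < a + m → x j = c) : wordAt x a m = List.replicate m c := by
  rw [wordAt_congr (y := fun _ => c) h]
  simp [wordAt_eq_map]

theorem wordAt_shiftPow (x : ℤ → A) (k a : ℤ) (m : ℕ) :
    wordAt (shiftPow k x) a m = wordAt x (a + k) m := by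
  simp only [wordAt_eq_map, shiftPow]
  exact List.map_congr_left fun j _ => by ring_nf

theorem wordAt_infix_wordAt (x : ℤ → A) {a b : ℤ} {m l : ℕ} (hb : b ≤ a)
    (he : a + m ≤ b + l) : wordAt x a m <:+: wordAt x b l := by
  obtain ⟨p, rfl⟩ : ∃ p : ℕ, a = b + p := ⟨(a - b).toNat, by omega⟩
  obtain ⟨q, rfl⟩ : ∃ q : ℕ, l = p + m + q := ⟨l - p - m, by omega⟩
  refine ⟨wordAt x b p, wordAt x (b + p + m) q, ?_⟩
  rw [wordAt_add, wordAt_add]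
  push_cast
  ring_nf

theorem wordAt_centered (x : ℤ → A) (c : ℤ) (m : ℕ) :
    wordAt x (c - m) (2 * m + 1) = wordAt x (c - m) m ++ x c :: wordAt x (c + 1) m := by
  rw [show 2 * m + 1 = m + (m + 1) by omega, wordAt_add, wordAt_succ, sub_add_cancel]

end Words

section Language

variable {S : Set ℕ}

theorem inGenStar_nil : InGenStar S [] := ⟨[], by simp, rfl⟩

theorem inGenStar_genWord {m : ℕ} (hm : m ∈ S) : InGenStar S (genWord m) :=
  ⟨[m], by simpa using hm, by simp⟩

theorem InGenStar.append {u v : List Bool} (hu : InGenStar S u) (hv : InGenStar S v) :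
    InGenStar S (u ++ v) := by
  obtain ⟨l₁, hl₁, rfl⟩ := hu
  obtain ⟨l₂, hl₂, rfl⟩ := hv
  exact ⟨l₁ ++ l₂, by simpa [or_imp, forall_and] using ⟨hl₁, hl₂⟩, by simp⟩

theorem exists_eq_replicate_true_append {n : ℕ} {α β w : List Bool}
    (h : α ++ false :: β = List.replicate n true ++ w) :
    ∃ γ, α = List.replicate n true ++ γ ∧ w = γ ++ false :: β := by
  induction n generalizing α with
  | zero => exact ⟨α, rfl, h.symm⟩
  | succ n ih =>
    cases α with
    | nil => simp [List.replicate_succ] at h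
    | cons b α =>
      simp only [List.cons_append, List.replicate_succ, List.cons.injEq] at h
      obtain ⟨γ, rfl, hw⟩ := ih h.2
      exact ⟨γ, by simp [h.1, List.replicate_succ], hw⟩

theorem InGenStar.split_false {α β : List Bool} (h : InGenStar S (α ++ false :: β)) :
    InGenStar S α ∧ InGenStar S (false :: β) := by
  obtain ⟨l, hl, hw⟩ := h
  induction l generalizing α with
  | nil => simp at hw
  | cons n l ih =>
    cases α with
    | nil => exact ⟨inGenStar_nil, n :: l, hl, hw⟩
    | cons b α =>
      simp only [List.cons_append, List.map_cons, List.flatten_cons, genWord,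
        List.cons.injEq] at hw
      obtain ⟨γ, rfl, hγ⟩ := exists_eq_replicate_true_append hw.2
      obtain ⟨hγS, hβS⟩ := ih (fun m hm => hl m (List.mem_cons_of_mem n hm)) hγ.symm
      refine ⟨?_, hβS⟩
      simpa [hw.1, genWord] using (inGenStar_genWord (hl n List.mem_cons_self)).append hγS

def IsSGapWord (S : Set ℕ) (w : List Bool) : Prop := ∃ v, InGenStar S v ∧ w <:+: v

theorem mem_SGap_iff {x : ℤ → Bool} : x ∈ SGap S ↔ ∀ i n, IsSGapWord S (wordAt x i n) :=
  Iff.rfl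

theorem IsSGapWord.infix {u w : List Bool} (hw : IsSGapWord S w) (h : u <:+: w) :
    IsSGapWord S u :=
  let ⟨v, hv, hwv⟩ := hw
  ⟨v, hv, h.trans hwv⟩

theorem isSGapWord_false_replicate (hinf : S.Infinite) (k : ℕ) :
    IsSGapWord S (false :: List.replicate k true) := by
  obtain ⟨m, hm, hkm⟩ := hinf.exists_gt k
  refine ⟨genWord m, inGenStar_genWord hm, [], List.replicate (m - k) true, ?_⟩
  simp [genWord, Nat.add_sub_cancel' hkm.le]

theorem isSGapWord_replicate (hinf : S.Infinite) (k : ℕ) :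
    IsSGapWord S (List.replicate k true) :=
  (isSGapWord_false_replicate hinf k).infix (List.suffix_cons _ _).isInfix

theorem IsSGapWord.append_false_replicate (hinf : S.Infinite) {u : List Bool}
    (h : IsSGapWord S (u ++ [false])) (k : ℕ) :
    IsSGapWord S (u ++ false :: List.replicate k true) := by
  obtain ⟨_, hw, s, t, rfl⟩ := h
  obtain ⟨m, hm, hkm⟩ := hinf.exists_gt k
  have hsu : InGenStar S (s ++ u) := (InGenStar.split_false (β := t) (by simpa using hw)).1
  refine ⟨s ++ u ++ genWord m, hsu.append (inGenStar_genWord hm), s,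
    List.replicate (m - k) true, ?_⟩
  simp [genWord, Nat.add_sub_cancel' hkm.le]

theorem IsSGapWord.replicate_append_false (hinf : S.Infinite) {u : List Bool}
    (h : IsSGapWord S (false :: u)) (k : ℕ) :
    IsSGapWord S (List.replicate k true ++ false :: u) := by
  obtain ⟨_, hw, s, t, rfl⟩ := h
  obtain ⟨m, hm, hkm⟩ := hinf.exists_gt k
  have hut : InGenStar S (false :: (u ++ t)) :=
    (InGenStar.split_false (α := s) (by simpa using hw)).2
  refine ⟨genWord m ++ false :: (u ++ t), (inGenStar_genWord hm).append hut,
    false :: List.replicate (m - k) true, t, ?_⟩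
  simp only [genWord, List.cons_append, List.append_assoc, List.cons.injEq, true_and]
  rw [← List.append_assoc, ← List.replicate_add, Nat.sub_add_cancel hkm.le]

theorem mem_SGap_of_centered {x : ℤ → Bool} (c : ℤ)
    (h : ∀ m : ℕ, IsSGapWord S (wordAt x (c - m) (2 * m + 1))) : x ∈ SGap S := by
  intro a m
  have := le_abs_self (a - c)
  have := neg_abs_le (a - c)
  refine (h ((a - c).natAbs + m)).infix (wordAt_infix_wordAt x ?_ ?_) <;> push_cast <;> omega

theorem shiftPow_mem_SGap {x : ℤ → Bool} (hx : x ∈ SGap S) (k : ℤ) :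
    shiftPow k x ∈ SGap S :=
  fun a m => by rw [wordAt_shiftPow]; exact hx (a + k) m

end Language

section Configurations

variable {S : Set ℕ}

def allOnes : ℤ → Bool := fun _ => true

def singleZero : ℤ → Bool := fun j => decide (j ≠ 0)

def onesAfter (x : ℤ → Bool) (i : ℤ) : ℤ → Bool := fun j => if j ≤ i then x j else true

def onesBefore (x : ℤ → Bool) (i : ℤ) : ℤ → Bool := fun j => if i ≤ j then x j else true

theorem allOnes_mem_SGap (hinf : S.Infinite) : allOnes ∈ SGap S := fun a m => by
  rw [wordAt_eq_replicate (x := allOnes) (c := true) fun _ _ _ => rfl]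
  exact isSGapWord_replicate hinf m

theorem singleZero_mem_SGap (hinf : S.Infinite) : singleZero ∈ SGap S := by
  refine mem_SGap_of_centered 0 fun m => ?_
  have hleft : wordAt singleZero (0 - m) m = List.replicate m true :=
    wordAt_eq_replicate fun j _ hj => by simp [singleZero]; omega
  have hright : wordAt singleZero (0 + 1) m = List.replicate m true :=
    wordAt_eq_replicate fun j hj _ => by simp [singleZero]; omega
  rw [wordAt_centered, hleft, hright]
  exact (isSGapWord_false_replicate hinf m).replicate_append_false hinf m

theorem onesAfter_mem_SGap (hinf : S.Infinite) {x : ℤ → Bool} {i : ℤ} (hx : x ∈ SGap S)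
    (hi : x i = false) : onesAfter x i ∈ SGap S := by
  refine mem_SGap_of_centered i fun m => ?_
  have hleft : wordAt (onesAfter x i) (i - m) m = wordAt x (i - m) m :=
    wordAt_congr fun j _ hj => if_pos (by omega)
  have hright : wordAt (onesAfter x i) (i + 1) m = List.replicate m true :=
    wordAt_eq_replicate fun j hj _ => if_neg (by omega)
  have hx' := mem_SGap_iff.mp hx (i - m) (m + 1)
  rw [wordAt_succ', sub_add_cancel, hi] at hx'
  rw [wordAt_centered, hleft, hright, onesAfter, if_pos le_rfl, hi]
  exact hx'.append_false_replicate hinf m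

theorem onesBefore_mem_SGap (hinf : S.Infinite) {x : ℤ → Bool} {i : ℤ} (hx : x ∈ SGap S)
    (hi : x i = false) : onesBefore x i ∈ SGap S := by
  refine mem_SGap_of_centered i fun m => ?_
  have hleft : wordAt (onesBefore x i) (i - m) m = List.replicate m true :=
    wordAt_eq_replicate fun j _ hj => if_neg (by omega)
  have hright : wordAt (onesBefore x i) (i + 1) m = wordAt x (i + 1) m :=
    wordAt_congr fun j hj _ => if_pos (by omega)
  have hx' := mem_SGap_iff.mp hx i (m + 1)
  rw [wordAt_succ, hi] at hx'
  rw [wordAt_centered, hleft, hright, onesBefore, if_pos le_rfl, hi]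
  exact hx'.replicate_append_false hinf m

end Configurations

section Radius

variable {A : Type*} {X : Set (ℤ → A)} {H : (ℤ → A) → (ℤ → A)} {r : ℕ}

theorem HasRadius.apply_eq_apply (hH : HasRadius X H r) {x y : ℤ → A} (hx : x ∈ X)
    (hy : y ∈ X) {i j : ℤ} (h : ∀ d : ℤ, |d| ≤ r → x (i + d) = y (j + d)) :
    H x i = H y j := by
  obtain ⟨f, hf⟩ := hH
  rw [hf x hx, hf y hy]
  congr 1
  funext k
  have := h (k - r) (abs_le.mpr ⟨by omega, by omega⟩)
  rwa [← add_sub_assoc, ← add_sub_assoc, add_sub_right_comm, add_sub_right_comm j] at this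

theorem HasRadius.apply_eq_of_eqOn (hH : HasRadius X H r) {x y : ℤ → A} (hx : x ∈ X)
    (hy : y ∈ X) {i : ℤ} (h : ∀ j, i - r ≤ j → j ≤ i + r → x j = y j) :
    H x i = H y i :=
  hH.apply_eq_apply hx hy fun d hd => h _ (by linarith [neg_abs_le d]) (by linarith [le_abs_self d])

theorem HasRadius.apply_shiftPow (hH : HasRadius X H r) {x : ℤ → A} (hx : x ∈ X) {k : ℤ}
    (hkx : shiftPow k x ∈ X) : H (shiftPow k x) = shiftPow k (H x) :=
  funext fun i => hH.apply_eq_apply hkx hx fun d _ => by simp only [shiftPow]; ring_nf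

end Radius

section Zeros

def LastZeroAt (x : ℤ → Bool) (i : ℤ) : Prop := x i = false ∧ ∀ j, i < j → x j = true

def FirstZeroAt (x : ℤ → Bool) (i : ℤ) : Prop := x i = false ∧ ∀ j, j < i → x j = true

theorem lastZeroAt_shiftPow_iff {x : ℤ → Bool} {k i : ℤ} :
    LastZeroAt (shiftPow k x) i ↔ LastZeroAt x (i + k) := by
  refine and_congr Iff.rfl ⟨fun h j hj => ?_, fun h j hj => h (j + k) (by omega)⟩
  simpa [shiftPow] using h (j - k) (by omega)

theorem firstZeroAt_shiftPow_iff {x : ℤ → Bool} {k i : ℤ} :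
    FirstZeroAt (shiftPow k x) i ↔ FirstZeroAt x (i + k) := by
  refine and_congr Iff.rfl ⟨fun h j hj => ?_, fun h j hj => h (j + k) (by omega)⟩
  simpa [shiftPow] using h (j - k) (by omega)

theorem LastZeroAt.unique {x : ℤ → Bool} {i j : ℤ} (hi : LastZeroAt x i)
    (hj : LastZeroAt x j) : i = j := by
  by_contra hne
  rcases lt_or_gt_of_ne hne with h | h
  · exact Bool.false_ne_true (hj.1.symm.trans (hi.2 j h))
  · exact Bool.false_ne_true (hi.1.symm.trans (hj.2 i h))

theorem FirstZeroAt.unique {x : ℤ → Bool} {i j : ℤ} (hi : FirstZeroAt x i)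
    (hj : FirstZeroAt x j) : i = j := by
  by_contra hne
  rcases lt_or_gt_of_ne hne with h | h
  · exact Bool.false_ne_true (hi.1.symm.trans (hj.2 i h))
  · exact Bool.false_ne_true (hj.1.symm.trans (hi.2 j h))

theorem exists_lastZeroAt {x : ℤ → Bool} (hx : x ≠ allOnes) {b : ℤ}
    (hb : ∀ j, b < j → x j = true) : ∃ i, LastZeroAt x i := by
  obtain ⟨i, hi, hmax⟩ := Int.exists_greatest_of_bdd (P := fun j => x j = false)
    ⟨b, fun j hj => not_lt.mp fun h => by simp [hb j h] at hj⟩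
    (by simpa [funext_iff, allOnes] using hx)
  exact ⟨i, hi, fun j hj => by simpa using mt (hmax j) (not_le.mpr hj)⟩

theorem exists_firstZeroAt {x : ℤ → Bool} (hx : x ≠ allOnes) {b : ℤ}
    (hb : ∀ j, j < b → x j = true) : ∃ i, FirstZeroAt x i := by
  obtain ⟨i, hi, hmin⟩ := Int.exists_least_of_bdd (P := fun j => x j = false)
    ⟨b, fun j hj => not_lt.mp fun h => by simp [hb j h] at hj⟩
    (by simpa [funext_iff, allOnes] using hx)
  exact ⟨i, hi, fun j hj => by simpa using mt (hmin j) (not_le.mpr hj)⟩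

end Zeros

section Shiftless

variable {S : Set ℕ} {F G H : (ℤ → Bool) → (ℤ → Bool)} {r : ℕ}

def IsShiftless (S : Set ℕ) (F : (ℤ → Bool) → (ℤ → Bool)) : Prop :=
  Set.MapsTo F (SGapLeft S) (SGapLeft S) ∧ Set.MapsTo F (SGapRight S) (SGapRight S)

theorem LastZeroAt.apply (hH : HasRadius (SGap S) H r)
    (hl : Set.MapsTo H (SGapLeft S) (SGapLeft S)) {x : ℤ → Bool} (hx : x ∈ SGap S) {i : ℤ}
    (h : LastZeroAt x i) : LastZeroAt (H x) i := by
  have hix := shiftPow_mem_SGap hx i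
  have : LastZeroAt (H (shiftPow i x)) 0 :=
    (hl ⟨hix, lastZeroAt_shiftPow_iff.mpr (by rwa [zero_add])⟩).2
  rwa [hH.apply_shiftPow hx hix, lastZeroAt_shiftPow_iff, zero_add] at this

theorem FirstZeroAt.apply (hH : HasRadius (SGap S) H r)
    (hR : Set.MapsTo H (SGapRight S) (SGapRight S)) {x : ℤ → Bool} (hx : x ∈ SGap S) {i : ℤ}
    (h : FirstZeroAt x i) : FirstZeroAt (H x) i := by
  have hix := shiftPow_mem_SGap hx i
  have : FirstZeroAt (H (shiftPow i x)) 0 :=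
    (hR ⟨hix, firstZeroAt_shiftPow_iff.mpr (by rwa [zero_add])⟩).2
  rwa [hH.apply_shiftPow hx hix, firstZeroAt_shiftPow_iff, zero_add] at this

/-- The zero of `H singleZero` stays at `0`, so the local rule sends `1^(2r+1)` to `1`. -/
theorem HasRadius.apply_allOnes (hinf : S.Infinite) (hH : HasRadius (SGap S) H r)
    (hR : Set.MapsTo H (SGapRight S) (SGapRight S)) : H allOnes = allOnes := by
  have hzero : FirstZeroAt singleZero 0 := ⟨rfl, fun j hj => by simp [singleZero]; omega⟩
  have hone : H singleZero (-r - 1) = true :=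
    (hR ⟨singleZero_mem_SGap hinf, hzero⟩).2.2 _ (by omega)
  funext j
  refine (hH.apply_eq_apply (allOnes_mem_SGap hinf) (singleZero_mem_SGap hinf)
    fun d hd => ?_).trans hone
  have := le_abs_self d
  simp [allOnes, singleZero]
  omega

theorem mapsTo_SGapLeft_of_rightInverse (hinf : S.Infinite) (hFr : HasRadius (SGap S) F r)
    (hGr : HasRadius (SGap S) G r) (hG : Set.MapsTo G (SGap S) (SGap S))
    (hFG : ∀ y ∈ SGap S, F (G y) = y) (hF1 : F allOnes = allOnes) (hG1 : G allOnes = allOnes)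
    (hFl : Set.MapsTo F (SGapLeft S) (SGapLeft S)) : Set.MapsTo G (SGapLeft S) (SGapLeft S) := by
  rintro y ⟨hy, hy0⟩
  have hGy := hG hy
  have hne : G y ≠ allOnes := fun h => by
    have : y = allOnes := by rw [← hFG y hy, h, hF1]
    exact absurd hy0.1 (by simp [this, allOnes])
  have htail : ∀ j, (r : ℤ) < j → G y j = true := fun j hj => by
    rw [hGr.apply_eq_of_eqOn hy (allOnes_mem_SGap hinf) fun k hk _ => hy0.2 k (by omega), hG1]
    rfl
  obtain ⟨k, hk⟩ := exists_lastZeroAt hne htail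
  have hkF := hk.apply hFr hFl hGy
  rw [hFG y hy] at hkF
  obtain rfl := hkF.unique hy0
  exact ⟨hGy, hk⟩

theorem mapsTo_SGapRight_of_rightInverse (hinf : S.Infinite) (hFr : HasRadius (SGap S) F r)
    (hGr : HasRadius (SGap S) G r) (hG : Set.MapsTo G (SGap S) (SGap S))
    (hFG : ∀ y ∈ SGap S, F (G y) = y) (hF1 : F allOnes = allOnes) (hG1 : G allOnes = allOnes)
    (hFR : Set.MapsTo F (SGapRight S) (SGapRight S)) :
    Set.MapsTo G (SGapRight S) (SGapRight S) := by
  rintro y ⟨hy, hy0⟩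
  have hGy := hG hy
  have hne : G y ≠ allOnes := fun h => by
    have : y = allOnes := by rw [← hFG y hy, h, hF1]
    exact absurd hy0.1 (by simp [this, allOnes])
  have htail : ∀ j, j < -(r : ℤ) → G y j = true := fun j hj => by
    rw [hGr.apply_eq_of_eqOn hy (allOnes_mem_SGap hinf) fun k _ hk => hy0.2 k (by omega), hG1]
    rfl
  obtain ⟨k, hk⟩ := exists_firstZeroAt hne htail
  have hkF := hk.apply hFr hFR hGy
  rw [hFG y hy] at hkF
  obtain rfl := hkF.unique hy0
  exact ⟨hGy, hk⟩

theorem IsShiftless.of_inverse (hinf : S.Infinite) (hF : IsShiftless S F)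
    (hFr : HasRadius (SGap S) F r) (hGr : HasRadius (SGap S) G r)
    (hG : Set.MapsTo G (SGap S) (SGap S)) (hGF : ∀ x ∈ SGap S, G (F x) = x)
    (hFG : ∀ y ∈ SGap S, F (G y) = y) : IsShiftless S G := by
  have hF1 : F allOnes = allOnes := hFr.apply_allOnes hinf hF.2
  have hG1 : G allOnes = allOnes := (congrArg G hF1).symm.trans (hGF _ (allOnes_mem_SGap hinf))
  exact ⟨mapsTo_SGapLeft_of_rightInverse hinf hFr hGr hG hFG hF1 hG1 hF.1,
    mapsTo_SGapRight_of_rightInverse hinf hFr hGr hG hFG hF1 hG1 hF.2⟩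

theorem IsShiftless.occursAt_gapWord (hinf : S.Infinite) (hH : IsShiftless S H)
    (hHr : HasRadius (SGap S) H r) {x : ℤ → Bool} (hx : x ∈ SGap S) {i : ℤ} {n : ℕ}
    (hn : 2 * r ≤ n) (h : occursAt x (gapWord n) i) : occursAt (H x) (gapWord n) i := by
  rw [occursAt_gapWord_iff] at h ⊢
  obtain ⟨h0, hones, h1⟩ := h
  have hy := onesAfter_mem_SGap hinf hx h0
  have hz := onesBefore_mem_SGap hinf hx h1
  have hHy : LastZeroAt (H (onesAfter x i)) i :=
    LastZeroAt.apply hHr hH.1 hy ⟨(if_pos le_rfl).trans h0, fun j hj => if_neg (by omega)⟩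
  have hHz : FirstZeroAt (H (onesBefore x (i + n + 1))) (i + n + 1) :=
    FirstZeroAt.apply hHr hH.2 hz ⟨(if_pos le_rfl).trans h1, fun j hj => if_neg (by omega)⟩
  have hxy : ∀ j ≤ i + n - r, H x j = H (onesAfter x i) j := fun j hj =>
    hHr.apply_eq_of_eqOn hx hy fun k _ hk => by
      simp only [onesAfter]
      split_ifs
      · rfl
      · exact hones k (by omega) (by omega)
  have hxz : ∀ j ≥ i + 1 + r, H x j = H (onesBefore x (i + n + 1)) j := fun j hj =>
    hHr.apply_eq_of_eqOn hx hz fun k hk _ => by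
      simp only [onesBefore]
      split_ifs
      · rfl
      · exact hones k (by omega) (by omega)
  refine ⟨(hxy i (by omega)).trans hHy.1, fun j hj hj' => ?_, (hxz _ (by omega)).trans hHz.1⟩
  by_cases hjn : j ≤ i + n - r
  · exact (hxy j hjn).trans (hHy.2 j hj)
  · exact (hxz j (by omega)).trans (hHz.2 j (by omega))

end Shiftless

theorem stmt13_general (S : Set ℕ) (hinf : S.Infinite)
    (F G : (ℤ → Bool) → (ℤ → Bool)) (r : ℕ)
    (hFmaps : Set.MapsTo F (SGap S) (SGap S)) (hGmaps : Set.MapsTo G (SGap S) (SGap S))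
    (hFr : HasRadius (SGap S) F r) (hGr : HasRadius (SGap S) G r)
    (hinv : ∀ x ∈ SGap S, G (F x) = x ∧ F (G x) = x)
    (hshiftless : F '' SGapLeft S ⊆ SGapLeft S ∧ F '' SGapRight S ⊆ SGapRight S) :
    ∀ x ∈ SGap S, ∀ i : ℤ, ∀ n : ℕ, 2 * r ≤ n →
      (occursAt x (gapWord n) i ↔ occursAt (F x) (gapWord n) i) := by
  have hF : IsShiftless S F :=
    ⟨Set.mapsTo_iff_image_subset.mpr hshiftless.1, Set.mapsTo_iff_image_subset.mpr hshiftless.2⟩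
  have hG : IsShiftless S G :=
    hF.of_inverse hinf hFr hGr hGmaps (fun x hx => (hinv x hx).1) fun x hx => (hinv x hx).2
  intro x hx i n hn
  refine ⟨hF.occursAt_gapWord hinf hFr hx hn, fun h => ?_⟩
  simpa only [(hinv x hx).1] using hG.occursAt_gapWord hinf hGr (hFmaps hx) hn h

/-- For a non-sofic `S`-gap shift and a shiftless automorphism `F` of
radius `r` whose inverse also has radius `r`, the word `01^n0` (`n ≥ 2r`) occurs in `x` at
position `i` iff it occurs in `F(x)` at position `i`. -/
theorem stmt13 (S : Set ℕ) (hS : S.Nonempty) (hinf : S.Infinite)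
    (hnp : ¬ EventuallyPeriodic S)
    (F G : (ℤ → Bool) → (ℤ → Bool)) (r : ℕ)
    (hFmaps : Set.MapsTo F (SGap S) (SGap S)) (hGmaps : Set.MapsTo G (SGap S) (SGap S))
    (hFr : HasRadius (SGap S) F r) (hGr : HasRadius (SGap S) G r)
    (hinv : ∀ x ∈ SGap S, G (F x) = x ∧ F (G x) = x)
    (hshiftless : F '' SGapLeft S ⊆ SGapLeft S ∧ F '' SGapRight S ⊆ SGapRight S) :
    ∀ x ∈ SGap S, ∀ i : ℤ, ∀ n : ℕ, 2 * r ≤ n →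
      (occursAt x (gapWord n) i ↔ occursAt (F x) (gapWord n) i) :=
  stmt13_general S hinf F G r hFmaps hGmaps hFr hGr hinv hshiftless
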